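/- For all integers n ≥ 1 and all real z, Σ_{j=n}^∞ (-1)^j binom(z, j) = (-1)^n binom(z-1, n-1), where binom(z,j) := z(z-1)⋯(z-j+1)/j! is the generalized binomial coefficient, provided the series converges (which holds for z > 0 in particular). -/
import Mathlib

open Filter Finset Real

/-- Generalized binomial coefficient `binom(z, j) = z(z-1)⋯(z-j+1)/j!` for real `z`. -/
noncomputable def genBinom (z : ℝ) (j : ℕ) : ℝ :=
  (∏ m ∈ Finset.range j, (z - (m : ℝ))) / (j.factorial : ℝ)

lemma genBinom_succ (z : ℝ) (k : ℕ) :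
    genBinom z (k+1) = genBinom z k * ((z - k) / (k+1)) := by
  unfold genBinom
  rw [Finset.prod_range_succ, Nat.factorial_succ]
  have h1 : ((k.factorial : ℝ)) ≠ 0 := Nat.cast_ne_zero.2 k.factorial_ne_zero
  have h2 : ((k:ℝ)+1) ≠ 0 := by positivity
  push_cast
  rw [div_mul_div_comm]
  rw [div_eq_div_iff (by positivity) (by positivity)]
  ring

lemma genBinom_pascal (z : ℝ) (k : ℕ) :
    genBinom z (k+1) = genBinom (z-1) (k+1) + genBinom (z-1) k := by
  unfold genBinom
  rw [Finset.prod_range_succ' (fun m => z - (m:ℝ)), Finset.prod_range_succ]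
  have h0 : (∏ i ∈ Finset.range k, (z - ((i:ℕ)+1 : ℕ):ℝ)) = ∏ i ∈ Finset.range k, (z - 1 - (i:ℝ)) := by
    apply Finset.prod_congr rfl
    intro m _
    push_cast
    ring
  have h1 : ((k.factorial : ℝ)) ≠ 0 := Nat.cast_ne_zero.2 k.factorial_ne_zero
  have h2 : ((k:ℝ)+1) ≠ 0 := by positivity
  rw [Nat.factorial_succ]
  push_cast at h0 ⊢
  rw [h0]
  field_simp
  ring

lemma telescope (z : ℝ) (k : ℕ) (N : ℕ) :
    ∑ j ∈ Finset.range N, (-1:ℝ)^(k+1+j) * genBinom z (k+1+j)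
      = (-1:ℝ)^(k+N) * genBinom (z-1) (k+N) - (-1:ℝ)^k * genBinom (z-1) k := by
  induction N with
  | zero => simp
  | succ N ih =>
    rw [Finset.sum_range_succ, ih]
    have h1 : k+1+N = (k+N)+1 := by ring
    rw [h1, genBinom_pascal]
    have h2 : k+(N+1) = (k+N)+1 := by ring
    rw [h2, pow_succ]
    ring

lemma abs_genBinom_tendsto_zero {z : ℝ} (hz : 0 < z) :
    Filter.Tendsto (fun N => |genBinom (z-1) N|) atTop (nhds 0) := by
  obtain ⟨M, hzM⟩ : ∃ M : ℕ, z ≤ M := exists_nat_ge z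
  set b : ℕ → ℝ := fun N => |genBinom (z-1) N| with hb
  have step : ∀ N, M ≤ N → b (N+1) = b N * ((N+1-z)/(N+1)) := by
    intro N hN
    have hzN : z ≤ N := hzM.trans (Nat.cast_le.2 hN)
    have h1 : genBinom (z-1) (N+1) = genBinom (z-1) N * ((z-1-(N:ℝ))/(N+1)) :=
      genBinom_succ (z-1) N
    simp only [hb, h1, abs_mul, abs_div]
    congr 1
    rw [abs_of_nonpos (by linarith), abs_of_pos (by positivity)]
    ring
  set S : ℕ → ℝ := fun p => ∑ i ∈ Finset.range p, (1 : ℝ)/(M+i+1) with hS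
  have key : ∀ p, b (M+p) ≤ b M * Real.exp (-z * S p) := by
    intro p
    induction p with
    | zero => simp [hS]
    | succ p ih =>
      have h1 : b (M+p+1) = b (M+p) * (((M+p:ℕ)+1-z)/((M+p:ℕ)+1)) :=
        step (M+p) (Nat.le_add_right _ _)
      have hpos : (0:ℝ) < (M+p:ℕ)+1 := by positivity
      have hden : z ≤ (M+p:ℕ)+1 := by
        push_cast; linarith [Nat.cast_nonneg (α := ℝ) p]
      have hratio0 : (0:ℝ) ≤ ((M+p:ℕ)+1-z)/((M+p:ℕ)+1) :=
        div_nonneg (by linarith) (by linarith)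
      have hratio : ((M+p:ℕ)+1-z)/((M+p:ℕ)+1) ≤ Real.exp (-(z/((M+p:ℕ)+1))) := by
        have h2 : ((M+p:ℕ)+1-z)/((M+p:ℕ)+1) = -(z/((M+p:ℕ)+1)) + 1 := by
          field_simp; ring
        rw [h2]
        exact Real.add_one_le_exp _
      have hSsucc : S (p+1) = S p + 1/((M+p:ℕ)+1) := by
        simp [hS, Finset.sum_range_succ]
      calc b (M+(p+1)) = b (M+p) * (((M+p:ℕ)+1-z)/((M+p:ℕ)+1)) := by
            rw [← h1]; ring_nf
        _ ≤ (b M * Real.exp (-z * S p)) * Real.exp (-(z/((M+p:ℕ)+1))) :=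
            mul_le_mul ih hratio hratio0 (by positivity)
        _ = b M * Real.exp (-z * S (p+1)) := by
            rw [hSsucc, mul_assoc, ← Real.exp_add]
            congr 2
            ring
  have hStop : Tendsto S atTop atTop := by
    have hH := tendsto_sum_range_one_div_nat_succ_atTop
    have h1 : ∀ p, S p = (∑ i ∈ Finset.range (M+p), (1:ℝ)/(i+1)) - ∑ i ∈ Finset.range M, (1:ℝ)/(i+1) := by
      intro p
      have hsplit : (∑ i ∈ Finset.range (M+p), (1:ℝ)/(i+1))
          = (∑ i ∈ Finset.range M, (1:ℝ)/(i+1)) + ∑ i ∈ Finset.range p, (1:ℝ)/((M:ℝ)+i+1) := by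
        rw [Finset.sum_range_add]
        congr 1
        refine Finset.sum_congr rfl fun i _ => ?_
        push_cast
        ring_nf
      rw [hsplit]
      simp only [hS]
      ring
    have h2 : Tendsto (fun p : ℕ => M + p) atTop atTop := by
      simpa [Nat.add_comm] using tendsto_add_atTop_nat M
    have h3 : Tendsto (fun p => ∑ i ∈ Finset.range (M+p), (1:ℝ)/(i+1)) atTop atTop :=
      hH.comp h2
    rw [funext h1]
    exact tendsto_atTop_add_const_right _ _ h3
  have hexp : Tendsto (fun p => b M * Real.exp (-z * S p)) atTop (nhds 0) := by
    have h3 : Tendsto (fun p => -z * S p) atTop atBot :=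
      Tendsto.const_mul_atTop_of_neg (by linarith) hStop
    have h4 := Real.tendsto_exp_atBot.comp h3
    simpa using h4.const_mul (b M)
  have hb0 : Tendsto (fun p => b (M+p)) atTop (nhds 0) :=
    squeeze_zero (fun p => abs_nonneg _) key hexp
  rw [← tendsto_add_atTop_iff_nat M]
  simpa [Nat.add_comm] using hb0

lemma abs_mul_sub_aux {x r : ℝ} (h0 : 0 ≤ r) (h1 : r ≤ 1) :
    |x * r - x| = |x| - |x * r| := by
  have h2 : |r - 1| = 1 - r := by rw [abs_of_nonpos (by linarith)]; ring
  rw [show x * r - x = x * (r - 1) by ring, abs_mul, abs_mul, h2, abs_of_nonneg h0]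
  ring

lemma summable_alt {z : ℝ} (hz : 0 < z) (k : ℕ) :
    Summable (fun j => (-1:ℝ)^(k+1+j) * genBinom z (k+1+j)) := by
  obtain ⟨M, hzM⟩ : ∃ M : ℕ, z ≤ M := exists_nat_ge z
  set a : ℕ → ℝ := fun N => (-1:ℝ)^N * genBinom (z-1) N with ha
  have hf : ∀ j, (-1:ℝ)^(k+1+j) * genBinom z (k+1+j) = a ((k+j)+1) - a (k+j) := by
    intro j
    have h1 : k+1+j = (k+j)+1 := by omega
    rw [h1, genBinom_pascal]
    simp only [ha, pow_succ]
    ring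
  have hdec : ∀ N, M ≤ N → |a (N+1) - a N| = |a N| - |a (N+1)| := by
    intro N hN
    have hzN : z ≤ N := hzM.trans (Nat.cast_le.2 hN)
    have hrec : a (N+1) = a N * (((N:ℝ)+1-z)/((N:ℝ)+1)) := by
      simp only [ha, pow_succ]
      rw [genBinom_succ (z-1) N]
      have hpos : ((N:ℝ)+1) ≠ 0 := by positivity
      field_simp
      ring
    have hr0 : (0:ℝ) ≤ ((N:ℝ)+1-z)/((N:ℝ)+1) := div_nonneg (by linarith) (by positivity)
    have hr1 : ((N:ℝ)+1-z)/((N:ℝ)+1) ≤ 1 := by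
      rw [div_le_one (by positivity)]; linarith
    rw [hrec, abs_mul_sub_aux hr0 hr1]
  rw [← summable_nat_add_iff M]
  apply Summable.of_abs
  apply summable_of_sum_range_le (c := |a (k+M)|) (fun j => abs_nonneg _)
  intro p
  have habs : ∀ j, |(-1:ℝ)^(k+1+(j+M)) * genBinom z (k+1+(j+M))|
      = |a (k+M+j)| - |a (k+M+j+1)| := by
    intro j
    rw [hf (j+M), show k+(j+M) = k+M+j by omega]
    have := hdec (k+M+j) (by omega)
    rw [this]
  calc ∑ j ∈ Finset.range p, |(-1:ℝ)^(k+1+(j+M)) * genBinom z (k+1+(j+M))|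
      = ∑ j ∈ Finset.range p, (|a (k+M+j)| - |a (k+M+j+1)|) :=
        Finset.sum_congr rfl fun j _ => habs j
    _ = |a (k+M+0)| - |a (k+M+p)| := Finset.sum_range_sub' (fun j => |a (k+M+j)|) p
    _ ≤ |a (k+M)| := by simp [abs_nonneg]

theorem alternating_binomial_tail_sum (n : ℕ) (hn : 1 ≤ n) (z : ℝ) (hz : 0 < z) :
    ∑' j : ℕ, (-1 : ℝ) ^ (n + j) * genBinom z (n + j) =
      (-1 : ℝ) ^ n * genBinom (z - 1) (n - 1) := by
  obtain ⟨k, rfl⟩ : ∃ k, n = k+1 := ⟨n-1, (Nat.succ_pred_eq_of_pos hn).symm⟩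
  have hsum := summable_alt hz k
  have htend := hsum.hasSum.tendsto_sum_nat
  have h0 : Tendsto (fun N => (-1:ℝ)^(k+N) * genBinom (z-1) (k+N)) atTop (nhds 0) := by
    rw [tendsto_zero_iff_abs_tendsto_zero]
    have h1 := abs_genBinom_tendsto_zero hz
    rw [← tendsto_add_atTop_iff_nat k] at h1
    have h2 : Tendsto (fun N => |genBinom (z-1) (k+N)|) atTop (nhds 0) := by
      simpa [Nat.add_comm] using h1
    have h3 : ∀ N, |(-1:ℝ)^(k+N) * genBinom (z-1) (k+N)| = |genBinom (z-1) (k+N)| := by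
      intro N
      rw [abs_mul, abs_pow, abs_neg, abs_one, one_pow, one_mul]
    exact h2.congr fun N => (h3 N).symm
  have hlim : Tendsto (fun N => ∑ j ∈ Finset.range N, (-1:ℝ)^(k+1+j) * genBinom z (k+1+j))
      atTop (nhds (0 - (-1:ℝ)^k * genBinom (z-1) k)) := by
    simp only [telescope z k]
    exact Tendsto.sub_const h0 _
  have heq := tendsto_nhds_unique htend hlim
  rw [heq]
  have hk : k + 1 - 1 = k := by omega
  rw [hk, pow_succ]
  ring
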